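/- Let φ* be the Legendre–Fenchel dual of a Pogorelov solution φ (so that |∂φ*(d_k)| = α_k with Σα_k = π and ∂φ*(ℝ²) ⊆ B(0,1)). Let Ω be the convex hull of the points {d_k}. Then ∂φ*(Ω) = B(0,1), and for every point x ∉ Ω and every p ∈ ∂φ*(x), one has ‖p‖ = 1 (i.e., p lies on the boundary of the unit ball). -/

import Mathlib

/-! The sets `∂φ*(d_k)` meet pairwise only inside lines, so their union has area `∑ α_k = π`;
hence the closed set `∂φ*(Ω) ⊆ B(0,1)` has full measure in the ball and is the whole ball.
If some `x ∉ Ω` had a subgradient `p` with `‖p‖ < 1`, move `p` a little in a direction `v`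
separating `x` from `Ω`: the new point is a subgradient at some `y ∈ Ω`, and monotonicity of
`∂φ*` gives `⟪v, y - x⟫ ≥ 0`, contradicting the separation. -/

open RealInnerProductSpace MeasureTheory

/-- The subgradient of `u` at a point `x`. -/
def SG (u : EuclideanSpace ℝ (Fin 2) → ℝ) (x : EuclideanSpace ℝ (Fin 2)) :
    Set (EuclideanSpace ℝ (Fin 2)) :=
  {p | ∀ z, u x + ⟪p, z - x⟫ ≤ u z}

/-- The subgradient image of a set `E`. -/
def SGs (u : EuclideanSpace ℝ (Fin 2) → ℝ) (E : Set (EuclideanSpace ℝ (Fin 2))) :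
    Set (EuclideanSpace ℝ (Fin 2)) :=
  ⋃ x ∈ E, SG u x

open Metric Set Topology

theorem ENNReal.ofReal_sum_le {ι : Type*} (s : Finset ι) (f : ι → ℝ) :
    ENNReal.ofReal (∑ i ∈ s, f i) ≤ ∑ i ∈ s, ENNReal.ofReal (f i) :=
  Finset.le_sum_of_subadditive _ ENNReal.ofReal_zero.le (fun _ _ => ENNReal.ofReal_add_le) s f

theorem MeasureTheory.Measure.addHaar_preimage_linearMap_singleton {E : Type*}
    [NormedAddCommGroup E] [NormedSpace ℝ E] [MeasurableSpace E] [BorelSpace E]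
    [FiniteDimensional ℝ E] (μ : Measure E) [μ.IsAddHaarMeasure] {l : E →ₗ[ℝ] ℝ} (hl : l ≠ 0)
    (c : ℝ) : μ (l ⁻¹' {c}) = 0 := by
  set A : AffineSubspace ℝ E := (affineSpan ℝ {c}).comap l.toAffineMap
  have hA : (A : Set E) = l ⁻¹' {c} := by
    rw [AffineSubspace.coe_comap, AffineSubspace.coe_affineSpan_singleton]; rfl
  rw [← hA]
  refine Measure.addHaar_affineSubspace μ A fun htop => hl ?_
  have hlc : ∀ x, l x = c := fun x => by
    have hx : x ∈ (A : Set E) := by rw [htop]; trivial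
    rwa [hA] at hx
  exact LinearMap.ext fun x => by rw [hlc x, ← hlc 0, map_zero, LinearMap.zero_apply]

theorem eq_closedBall_of_measure_closedBall_le {E : Type*} [NormedAddCommGroup E]
    [NormedSpace ℝ E] [MeasurableSpace E] [OpensMeasurableSpace E] {μ : Measure E}
    [μ.IsOpenPosMeasure] {S : Set E} {x : E} {r : ℝ} (hr : r ≠ 0) (hS : IsClosed S)
    (hSB : S ⊆ closedBall x r) (hfin : μ (closedBall x r) ≠ ⊤)
    (hμ : μ (closedBall x r) ≤ μ S) : S = closedBall x r := by
  have hnull : μ (closedBall x r \ S) = 0 := by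
    rw [measure_sdiff hSB hS.nullMeasurableSet (ne_top_of_le_ne_top hfin (measure_mono hSB))]
    exact tsub_eq_zero_of_le hμ
  have hempty : ball x r ∩ Sᶜ = ∅ :=
    ((isOpen_ball.inter hS.isOpen_compl).measure_eq_zero_iff μ).mp <|
      measure_mono_null (inter_subset_inter_left _ ball_subset_closedBall) hnull
  refine hSB.antisymm ?_
  rw [← closure_ball x hr]
  refine closure_minimal (fun y hy => ?_) hS
  by_contra hyS
  exact hempty.subset ⟨hy, hyS⟩

local notation "ℝ²" => EuclideanSpace ℝ (Fin 2)

theorem isClosed_SG (u : ℝ² → ℝ) (x : ℝ²) : IsClosed (SG u x) := by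
  simp only [SG, ofPred_forall]
  exact isClosed_iInter fun z => isClosed_le (by fun_prop) continuous_const

section Subgradient

variable {u : ℝ² → ℝ}

theorem isClosed_SGs (hu : Continuous u) {E : Set ℝ²} (hE : IsCompact E) :
    IsClosed (SGs u E) := by
  have : CompactSpace E := isCompact_iff_compactSpace.mp hE
  have hgraph : IsClosed {q : E × ℝ² | q.2 ∈ SG u q.1} := by
    have hinter : {q : E × ℝ² | q.2 ∈ SG u q.1}
        = ⋂ z, {q : E × ℝ² | u q.1 + ⟪q.2, z - q.1⟫ ≤ u z} := by
      ext; simp [SG]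
    rw [hinter]
    exact isClosed_iInter fun z => isClosed_le (by fun_prop) continuous_const
  convert isClosedMap_snd_of_compactSpace _ hgraph
  ext p
  simp [SGs]

theorem SGs_mono {E F : Set ℝ²} (h : E ⊆ F) : SGs u E ⊆ SGs u F :=
  biUnion_subset_biUnion_left h

theorem inner_sub_nonneg_of_mem_SG {x y p q : ℝ²} (hp : p ∈ SG u x) (hq : q ∈ SG u y) :
    0 ≤ ⟪q - p, y - x⟫ := by
  have hxy := hp y
  have hyx := hq x
  rw [← neg_sub y x, inner_neg_right] at hyx
  rw [inner_sub_left]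
  linarith

theorem SG_inter_SG_subset {x y : ℝ²} :
    SG u x ∩ SG u y ⊆ innerₛₗ ℝ (y - x) ⁻¹' {u y - u x} := by
  rintro p ⟨hp, hq⟩
  have hxy := hp y
  have hyx := hq x
  rw [← neg_sub y x, inner_neg_right] at hyx
  simp only [mem_preimage, innerₛₗ_apply_apply, mem_singleton_iff, real_inner_comm]
  linarith

theorem volume_SG_inter_SG {x y : ℝ²} (hxy : x ≠ y) : volume (SG u x ∩ SG u y) = 0 := by
  refine measure_mono_null SG_inter_SG_subset <|
    Measure.addHaar_preimage_linearMap_singleton volume (fun h => hxy ?_) _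
  have hself := congr($h (y - x))
  rwa [innerₛₗ_apply_apply, LinearMap.zero_apply, inner_self_eq_zero, sub_eq_zero,
    eq_comm] at hself

theorem volume_iUnion_SG {ι : Type*} [Countable ι] {d : ι → ℝ²} (hd : Function.Injective d) :
    volume (⋃ i, SG u (d i)) = ∑' i, volume (SG u (d i)) :=
  measure_iUnion₀ (fun _ _ hij => volume_SG_inter_SG (hd.ne hij))
    fun i => (isClosed_SG u (d i)).measurableSet.nullMeasurableSet

theorem le_norm_of_mem_SG_of_notMem {Ω : Set ℝ²} (hΩ : Convex ℝ Ω) (hΩc : IsClosed Ω)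
    {r : ℝ} (hball : ball 0 r ⊆ SGs u Ω) {x p : ℝ²} (hx : x ∉ Ω) (hp : p ∈ SG u x) :
    r ≤ ‖p‖ := by
  by_contra! hpr
  obtain ⟨f, c, hfΩ, hfx⟩ := geometric_hahn_banach_closed_point hΩ hΩc hx
  set v := (InnerProductSpace.toDual ℝ ℝ²).symm f
  obtain ⟨s, hps, hs⟩ : ∃ s : ℝ, p + s • v ∈ ball 0 r ∧ 0 < s := by
    have hcont : Continuous fun s : ℝ => p + s • v := by fun_prop
    have hnear := (hcont.tendsto' 0 p (by simp)).eventually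
      (isOpen_ball.mem_nhds (mem_ball_zero_iff.mpr hpr))
    exact ((hnear.filter_mono nhdsWithin_le_nhds).and self_mem_nhdsWithin).exists
      (f := 𝓝[>] 0)
  obtain ⟨y, hyΩ, hpy⟩ := mem_iUnion₂.mp (hball hps)
  have hmono := inner_sub_nonneg_of_mem_SG hp hpy
  rw [add_sub_cancel_left, real_inner_smul_left, inner_sub_right,
    InnerProductSpace.toDual_symm_apply, InnerProductSpace.toDual_symm_apply] at hmono
  nlinarith [hfΩ y hyΩ]

end Subgradient

theorem stmt9_general (φStar : EuclideanSpace ℝ (Fin 2) → ℝ) (hconv : ConvexOn ℝ Set.univ φStar)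
    (K : ℕ) (d : Fin K → EuclideanSpace ℝ (Fin 2)) (hd : Function.Injective d)
    (α : Fin K → ℝ) (hsum : ∑ k, α k = Real.pi)
    (hmass : ∀ k, volume (SG φStar (d k)) = ENNReal.ofReal (α k))
    (hsub : SGs φStar Set.univ ⊆ Metric.closedBall 0 1)
    (Ω : Set (EuclideanSpace ℝ (Fin 2))) (hΩ : Ω = convexHull ℝ (Set.range d)) :
    SGs φStar Ω = Metric.closedBall 0 1 ∧
      ∀ x ∉ Ω, ∀ p ∈ SG φStar x, ‖p‖ = 1 := by
  have hΩcompact : IsCompact Ω := hΩ ▸ (finite_range d).isCompact_convexHull (𝕜 := ℝ)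
  have hvol : volume (closedBall (0 : ℝ²) 1) ≤ volume (SGs φStar Ω) :=
    calc volume (closedBall (0 : ℝ²) 1)
        = ENNReal.ofReal (∑ k, α k) := by simp [hsum]
      _ ≤ ∑ k, volume (SG φStar (d k)) := by simpa [hmass] using ENNReal.ofReal_sum_le _ α
      _ = volume (⋃ k, SG φStar (d k)) := by rw [volume_iUnion_SG hd, tsum_fintype]
      _ ≤ volume (SGs φStar Ω) := measure_mono <| iUnion_subset fun k =>
          subset_biUnion_of_mem (u := SG φStar) (hΩ ▸ subset_convexHull ℝ _ (mem_range_self k))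
  have hball : SGs φStar Ω = closedBall 0 1 :=
    eq_closedBall_of_measure_closedBall_le one_ne_zero
      (isClosed_SGs hconv.locallyLipschitz.continuous hΩcompact)
      ((SGs_mono (subset_univ Ω)).trans hsub) (by simp) hvol
  refine ⟨hball, fun x hx p hp => le_antisymm ?_ ?_⟩
  · exact mem_closedBall_zero_iff.mp (hsub (mem_biUnion (mem_univ x) hp))
  · exact le_norm_of_mem_SG_of_notMem (hΩ ▸ convex_convexHull ℝ _) hΩcompact.isClosed
      (hball ▸ ball_subset_closedBall) hx hp

/-- for the dual φ* of a Pogorelov solution (|∂φ*(d_k)| = α_k, Σα_k = π,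
∂φ*(ℝ²) ⊆ B(0,1)), with Ω the convex hull of the points d_k, we have
∂φ*(Ω) = B(0,1) and every subgradient taken outside Ω lies on the unit sphere. -/
theorem stmt9 (φStar : EuclideanSpace ℝ (Fin 2) → ℝ) (hconv : ConvexOn ℝ Set.univ φStar)
    (K : ℕ) (d : Fin K → EuclideanSpace ℝ (Fin 2)) (hd : Function.Injective d)
    (α : Fin K → ℝ) (hα : ∀ k, 0 < α k) (hsum : ∑ k, α k = Real.pi)
    (hmass : ∀ k, volume (SG φStar (d k)) = ENNReal.ofReal (α k))
    (hsub : SGs φStar Set.univ ⊆ Metric.closedBall 0 1)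
    (Ω : Set (EuclideanSpace ℝ (Fin 2))) (hΩ : Ω = convexHull ℝ (Set.range d)) :
    SGs φStar Ω = Metric.closedBall 0 1 ∧
      ∀ x ∉ Ω, ∀ p ∈ SG φStar x, ‖p‖ = 1 :=
  stmt9_general φStar hconv K d hd α hsum hmass hsub Ω hΩ
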